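/- The set of Pythagorean triples {(x,y,z) ∈ ℤ³ : x²+y²=z²} is closed under the operation a •_{β,γ} b := M_{β,γ}(a).b and forms a commutative submonoid of (ℤ³, •_{β,γ}) with identity (1,0,1). -/

import Mathlib

def M (β γ : ℤ) (x y z : ℤ) : Matrix (Fin 3) (Fin 3) ℤ :=
  !![(γ^2 - γ + 1 - β^2)*(x - z) + β*y + z, β*(x - z) - γ*y, (β^2 - γ^2 + γ)*(x - z) - β*y;
     -β*(2*γ - 1)*(x - z) + γ*y, γ*(x - z) + β*y + z, β*(2*γ - 1)*(x - z) + (1 - γ)*y;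
     (β^2 + γ^2 - γ)*(x - z) - β*y, -β*(x - z) + (1 - γ)*y, -(β^2 + γ^2 - γ)*(x - z) + β*y + z]

def Mv (β γ : ℤ) (a : Fin 3 → ℤ) : Matrix (Fin 3) (Fin 3) ℤ := M β γ (a 0) (a 1) (a 2)

def bul (β γ : ℤ) (a b : Fin 3 → ℤ) : Fin 3 → ℤ := (Mv β γ a).mulVec b

def Pyth : Set (Fin 3 → ℤ) := {a | (a 0)^2 + (a 1)^2 = (a 2)^2}

/-!
The quadratic form `Q v = v₀² + v₁² - v₂²` composes under `•`: with `ℓ v = (1 - γ) v₀ + β v₁ + γ v₂`,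
`Q (a • b) = ℓ(a)² Q(b) + ℓ(b)² Q(a) + (2γ - 1 - β²) Q(a) Q(b)`, so the null cone of `Q`, the
Pythagorean triples, is closed under `•`. Associativity and commutativity hold on all of `ℤ³` as
polynomial identities, and `M β γ 1 0 1` is the identity matrix.
-/

namespace Pyth

variable (β γ : ℤ)

def form (v : Fin 3 → ℤ) : ℤ := v 0 ^ 2 + v 1 ^ 2 - v 2 ^ 2

def weight (v : Fin 3 → ℤ) : ℤ := (1 - γ) * v 0 + β * v 1 + γ * v 2

lemma mem_iff_form_eq_zero {v : Fin 3 → ℤ} : v ∈ Pyth ↔ form v = 0 :=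
  sub_eq_zero.symm

end Pyth

section bul

variable (β γ : ℤ) (a b c : Fin 3 → ℤ)

@[simp]
lemma bul_apply_zero : bul β γ a b 0 =
    ((γ^2 - γ + 1 - β^2)*(a 0 - a 2) + β*(a 1) + a 2)*(b 0) + (β*(a 0 - a 2) - γ*(a 1))*(b 1)
      + ((β^2 - γ^2 + γ)*(a 0 - a 2) - β*(a 1))*(b 2) := by
  simp [bul, Mv, M, Matrix.mulVec, dotProduct, Fin.sum_univ_three]

@[simp]
lemma bul_apply_one : bul β γ a b 1 =
    (-β*(2*γ - 1)*(a 0 - a 2) + γ*(a 1))*(b 0) + (γ*(a 0 - a 2) + β*(a 1) + a 2)*(b 1)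
      + (β*(2*γ - 1)*(a 0 - a 2) + (1 - γ)*(a 1))*(b 2) := by
  simp [bul, Mv, M, Matrix.mulVec, dotProduct, Fin.sum_univ_three]

@[simp]
lemma bul_apply_two : bul β γ a b 2 =
    ((β^2 + γ^2 - γ)*(a 0 - a 2) - β*(a 1))*(b 0) + (-β*(a 0 - a 2) + (1 - γ)*(a 1))*(b 1)
      + (-(β^2 + γ^2 - γ)*(a 0 - a 2) + β*(a 1) + a 2)*(b 2) := by
  simp [bul, Mv, M, Matrix.mulVec, dotProduct, Fin.sum_univ_three]

lemma form_bul : Pyth.form (bul β γ a b) =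
    Pyth.weight β γ a ^ 2 * Pyth.form b + Pyth.weight β γ b ^ 2 * Pyth.form a
      + (2 * γ - 1 - β ^ 2) * Pyth.form a * Pyth.form b := by
  simp only [Pyth.form, Pyth.weight, bul_apply_zero, bul_apply_one, bul_apply_two]
  ring

lemma bul_mem_Pyth {a b : Fin 3 → ℤ} (ha : a ∈ Pyth) (hb : b ∈ Pyth) : bul β γ a b ∈ Pyth := by
  rw [Pyth.mem_iff_form_eq_zero] at ha hb ⊢
  simp [form_bul, ha, hb]

lemma bul_assoc : bul β γ (bul β γ a b) c = bul β γ a (bul β γ b c) := by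
  ext i
  fin_cases i <;> simp only [Fin.zero_eta, Fin.mk_one, Fin.reduceFinMk, Fin.isValue, bul_apply_zero,
    bul_apply_one, bul_apply_two] <;> ring

lemma bul_comm : bul β γ a b = bul β γ b a := by
  ext i
  fin_cases i <;> simp only [Fin.zero_eta, Fin.mk_one, Fin.reduceFinMk, Fin.isValue, bul_apply_zero,
    bul_apply_one, bul_apply_two] <;> ring

lemma Mv_one_zero_one : Mv β γ ![1, 0, 1] = 1 := by
  ext i j; fin_cases i <;> fin_cases j <;> simp [Mv, M]

lemma one_bul : bul β γ ![1, 0, 1] a = a := by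
  rw [bul, Mv_one_zero_one, Matrix.one_mulVec]

end bul

theorem stmt_7 (β γ : ℤ) :
    (∀ a ∈ Pyth, ∀ b ∈ Pyth, bul β γ a b ∈ Pyth) ∧
    (![1, 0, 1] : Fin 3 → ℤ) ∈ Pyth ∧
    (∀ a ∈ Pyth, ∀ b ∈ Pyth, ∀ c ∈ Pyth,
      bul β γ (bul β γ a b) c = bul β γ a (bul β γ b c)) ∧
    (∀ a ∈ Pyth, ∀ b ∈ Pyth, bul β γ a b = bul β γ b a) ∧
    (∀ a ∈ Pyth, bul β γ ![1, 0, 1] a = a) ∧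
    (∀ a ∈ Pyth, bul β γ a ![1, 0, 1] = a) :=
  ⟨fun _ ha _ hb => bul_mem_Pyth β γ ha hb,
    by simp [Pyth],
    fun a _ b _ c _ => bul_assoc β γ a b c,
    fun a _ b _ => bul_comm β γ a b,
    fun a _ => one_bul β γ a,
    fun a _ => (bul_comm β γ a _).trans (one_bul β γ a)⟩
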